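/- arXiv:1909.04984 — 2 statements merged into one kernel-verified Lean document; each statement's English description precedes it below -/
import Mathlib

section
/- Let H : ℂ^n × ℂ → ℂ^n be polynomial and suppose x(t) ∈ ℂ[[t]]^n satisfies H(x(t), t) = 0 as formal power series. Let x^{(k)}(t) ∈ ℂ[[t]]^n with e(t) = x^{(k)}(t) − x(t), suppose the Jacobian J_H(x^{(k)}(t), t) is invertible over ℂ[[t]]^{n×n}, and define x̃^{(k+1)}(t) = x^{(k)}(t) − J_H(x^{(k)}(t),t)^{−1} H(x^{(k)}(t), t). Then ord(x̃^{(k+1)}(t) − x(t)) ≥ 2·ord(e(t)). -/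
/-- The order of a vector of formal power series: minimum of entrywise orders. -/
noncomputable def vecOrd {n : ℕ} (v : Fin n → PowerSeries ℂ) : ℕ∞ :=
  Finset.univ.inf fun i => (v i).order

/-- Evaluation of a polynomial map `H = (h₁,…,hₙ)`, with `hᵢ ∈ ℂ[x₁,…,xₙ][t]`
(encoded as `MvPolynomial (Fin n ⊕ Unit) ℂ`, the `Unit` variable being `t`),
at a vector of power series `x(t) ∈ ℂ[[t]]ⁿ` (substituting `t ↦ X`). -/
noncomputable def evalH {n : ℕ} (H : Fin n → MvPolynomial (Fin n ⊕ Unit) ℂ)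
    (x : Fin n → PowerSeries ℂ) : Fin n → PowerSeries ℂ :=
  fun i => MvPolynomial.aeval (Sum.elim x fun _ => PowerSeries.X) (H i)

/-- The Jacobian matrix `J_H` of `H` with respect to the variables `x_j`,
evaluated at a vector of power series. -/
noncomputable def jacH {n : ℕ} (H : Fin n → MvPolynomial (Fin n ⊕ Unit) ℂ)
    (x : Fin n → PowerSeries ℂ) : Matrix (Fin n) (Fin n) (PowerSeries ℂ) :=
  fun i j =>
    MvPolynomial.aeval (Sum.elim x fun _ => PowerSeries.X)
      (MvPolynomial.pderiv (Sum.inl j) (H i))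



noncomputable def ordIdeal (c : ℕ∞) : Ideal (PowerSeries ℂ) where
  carrier := {f | c ≤ f.order}
  zero_mem' := by simp [PowerSeries.order_zero]
  add_mem' := fun hf hg => le_trans (le_min hf hg) (PowerSeries.min_order_le_order_add _ _)
  smul_mem' := fun a f hf => by
    simp only [smul_eq_mul, Set.mem_setOf_eq, PowerSeries.order_mul]
    exact le_trans hf le_add_self

lemma mem_ordIdeal {c : ℕ∞} {f : PowerSeries ℂ} : f ∈ ordIdeal c ↔ c ≤ f.order := Iff.rfl

open MvPolynomial in
lemma taylor_mem {R S : Type*} [CommRing R] [CommRing S] [Algebra R S]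
    {σ : Type*} [Fintype σ] [DecidableEq σ]
    (I : Ideal S) (y e : σ → S) (he : ∀ j, e j ∈ I)
    (p : MvPolynomial σ R) :
    aeval (fun j => y j - e j) p -
      (aeval y p - ∑ j, aeval y (pderiv j p) * e j) ∈ I ^ 2 := by
  induction p using MvPolynomial.induction_on with
  | C a => simp
  | add p q hp hq =>
    have := (I ^ 2).add_mem hp hq
    convert this using 1
    simp only [map_add, Finset.sum_add_distrib, add_mul]
    ring
  | mul_X p i hp =>
    have key : ∀ j, (pderiv j) (p * X i) = pderiv j p * X i + p * if j = i then 1 else 0 := by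
      intro j
      rw [pderiv_mul, pderiv_X]
      by_cases h : j = i <;> simp [h, Pi.single_apply]
    have hsum : (∑ j, aeval y (pderiv j (p * X i)) * e j)
        = (∑ j, aeval y (pderiv j p) * e j) * y i + aeval y p * e i := by
      simp only [key, map_add, map_mul, aeval_X, add_mul, Finset.sum_add_distrib,
        Finset.mul_sum, Finset.sum_mul]
      congr 1
      · exact Finset.sum_congr rfl fun j _ => by ring
      · rw [Finset.sum_eq_single i]
        · simp
        · intro j _ hj; simp [hj]
        · simp
    have h1 := (I ^ 2).mul_mem_right (y i) hp
    have h2 := (I ^ 2).mul_mem_right (e i) hp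
    have h3 : (∑ j, aeval y (pderiv j p) * e j) * e i ∈ I ^ 2 := by
      rw [Finset.sum_mul]
      refine Ideal.sum_mem _ fun j _ => ?_
      have hji : e j * e i ∈ I ^ 2 := by rw [sq]; exact Ideal.mul_mem_mul (he j) (he i)
      have := (I ^ 2).mul_mem_left (aeval y (pderiv j p)) hji
      convert this using 1; ring
    have := (I ^ 2).add_mem ((I ^ 2).sub_mem h1 h2) h3
    convert this using 1
    simp only [map_mul, aeval_X, hsum]
    ring

/-- One Newton step on power series: if `H(x(t),t) = 0`, the Jacobian at the current
iterate `xk` is invertible over `ℂ[[t]]`, and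
`x̃ = xk − J_H(xk,t)⁻¹ H(xk,t)`, then `ord(x̃ − x) ≥ 2·ord(xk − x)`. -/
theorem stmt5 {n : ℕ} (H : Fin n → MvPolynomial (Fin n ⊕ Unit) ℂ)
    (x xk : Fin n → PowerSeries ℂ) (hx : ∀ i, evalH H x i = 0)
    (Jinv : Matrix (Fin n) (Fin n) (PowerSeries ℂ))
    (hJ : jacH H xk * Jinv = 1) (hJ' : Jinv * jacH H xk = 1) :
    vecOrd (xk - x) + vecOrd (xk - x) ≤ vecOrd ((xk - Jinv.mulVec (evalH H xk)) - x) := by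
  classical
  set d : ℕ∞ := Finset.univ.inf (fun i => ((xk - x) i).order) with hd
  -- the error vector over σ = Fin n ⊕ Unit
  set y : (Fin n ⊕ Unit) → PowerSeries ℂ := Sum.elim xk (fun _ => PowerSeries.X) with hy
  set e : (Fin n ⊕ Unit) → PowerSeries ℂ := Sum.elim (fun i => xk i - x i) (fun _ => 0) with he
  have hye : (fun j => y j - e j) = Sum.elim x (fun _ => PowerSeries.X) := by
    funext j; cases j <;> simp [hy, he]
  have heI : ∀ j, e j ∈ ordIdeal d := by
    intro j
    cases j with
    | inl i =>
      have : d ≤ ((xk - x) i).order := Finset.inf_le (Finset.mem_univ i)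
      simpa [he, mem_ordIdeal, Pi.sub_apply] using this
    | inr u => exact (ordIdeal d).zero_mem
  -- residual membership
  have hI2 : (ordIdeal d) ^ 2 ≤ ordIdeal (d + d) := by
    rw [sq, Ideal.mul_le]
    intro f hf g hg
    rw [mem_ordIdeal, PowerSeries.order_mul]
    exact add_le_add hf hg
  have hr : ∀ i, evalH H xk i - (jacH H xk).mulVec (fun j => xk j - x j) i ∈ ordIdeal (d + d) := by
    intro i
    have ht := taylor_mem (ordIdeal d) y e heI (H i)
    rw [hye] at ht
    have hzero : (MvPolynomial.aeval (Sum.elim x fun _ => PowerSeries.X)) (H i) = 0 := hx i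
    rw [hzero] at ht
    have hsum : (∑ j, MvPolynomial.aeval y (MvPolynomial.pderiv j (H i)) * e j)
        = (jacH H xk).mulVec (fun j => xk j - x j) i := by
      rw [Fintype.sum_sum_type]
      simp only [he, Sum.elim_inl, Sum.elim_inr, mul_zero, Finset.sum_const_zero, add_zero]
      rfl
    have := (ordIdeal d ^ 2).neg_mem ht
    have hmem : evalH H xk i - (jacH H xk).mulVec (fun j => xk j - x j) i ∈ ordIdeal d ^ 2 := by
      convert this using 1
      rw [hsum, hy]
      show evalH H xk i - _ = _
      unfold evalH
      ring
    exact hI2 hmem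
  -- final component computation
  have hfin : ∀ i, d + d ≤ (((xk - Jinv.mulVec (evalH H xk)) - x) i).order := by
    intro i
    set r : Fin n → PowerSeries ℂ :=
      fun i => evalH H xk i - (jacH H xk).mulVec (fun j => xk j - x j) i with hrdef
    have hev : evalH H xk = (jacH H xk).mulVec (fun j => xk j - x j) + r := by
      funext i; simp [hrdef]
    have hcomp : ((xk - Jinv.mulVec (evalH H xk)) - x) i = -(Jinv.mulVec r i) := by
      rw [hev, Matrix.mulVec_add, Pi.sub_apply, Pi.sub_apply, Matrix.mulVec_mulVec, hJ',
        Matrix.one_mulVec]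
      simp
      ring
    rw [hcomp]
    have : Jinv.mulVec r i ∈ ordIdeal (d + d) := by
      unfold Matrix.mulVec dotProduct
      exact Ideal.sum_mem _ fun j _ => Ideal.mul_mem_left _ _ (hr j)
    have := (ordIdeal (d + d)).neg_mem this
    exact this
  -- conclude, converting ℕ∞ to PartENat
  have hvec : vecOrd (xk - x) = d := by
    rw [hd]; rfl
  rw [hvec]
  unfold vecOrd
  refine Finset.le_inf fun i _ => ?_
  have := hfin i
  exact this
end

section
/- Let H : ℂ^n × ℂ → ℂ^n be polynomial, x(t) ∈ ℂ[[t]]^n with H(x(t),t) = 0, and let the Newton iteration with truncation define x^{(k+1)}(t) as the truncation to degree < w_k of x^{(k)}(t) − J_H(x^{(k)}(t),t)^{−1} H(x^{(k)}(t),t). If J_H(x^{(k)}(t),t) is a unit in ℂ[[t]]^{n×n} for all k, then ord(x^{(k+1)}(t) − x(t)) ≥ min(2·ord(x^{(k)}(t) − x(t)), w_k) for all k ≥ 0. -/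
section Aux

open MvPolynomial PowerSeries

lemma aux_order_neg (f : PowerSeries ℂ) : (-f).order = f.order := by
  have h : ∀ g : PowerSeries ℂ, g.order ≤ (-g).order := by
    intro g
    refine PowerSeries.le_order _ _ fun i hi => ?_
    rw [map_neg, PowerSeries.coeff_of_lt_order i hi, neg_zero]
  refine le_antisymm ?_ (h f)
  simpa using h (-f)

lemma aux_le_order_sum {ι : Type*} (s : Finset ι) (f : ι → PowerSeries ℂ) (d : ℕ∞)
    (h : ∀ i ∈ s, d ≤ (f i).order) : d ≤ (∑ i ∈ s, f i).order := by
  classical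
  induction s using Finset.induction_on with
  | empty => simp
  | @insert a s' hnot ih =>
    rw [Finset.sum_insert hnot]
    refine le_trans (le_min (h _ (Finset.mem_insert_self _ _)) (ih fun i hi => h _ ?_))
      (PowerSeries.min_order_le_order_add _ _)
    exact Finset.mem_insert_of_mem hi

/-- Taylor expansion with quadratic remainder, measured by `order`. -/
lemma aux_taylor {σ : Type*} [Fintype σ] [DecidableEq σ] (a b : σ → PowerSeries ℂ) (d : ℕ∞)
    (hd : ∀ j, d ≤ (a j - b j).order) (h : MvPolynomial σ ℂ) :
    d + d ≤ (MvPolynomial.aeval a h - MvPolynomial.aeval b h -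
      ∑ j, MvPolynomial.aeval b (MvPolynomial.pderiv j h) * (a j - b j)).order := by
  induction h using MvPolynomial.induction_on with
  | C c =>
    simp [MvPolynomial.pderiv_C]
  | add p q hp hq =>
    have e : (MvPolynomial.aeval a (p + q) - MvPolynomial.aeval b (p + q) -
        ∑ j, MvPolynomial.aeval b (MvPolynomial.pderiv j (p + q)) * (a j - b j))
        = (MvPolynomial.aeval a p - MvPolynomial.aeval b p -
            ∑ j, MvPolynomial.aeval b (MvPolynomial.pderiv j p) * (a j - b j))
        + (MvPolynomial.aeval a q - MvPolynomial.aeval b q -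
            ∑ j, MvPolynomial.aeval b (MvPolynomial.pderiv j q) * (a j - b j)) := by
      simp only [map_add, add_mul, Finset.sum_add_distrib]
      ring
    rw [e]
    exact le_trans (le_min hp hq) (PowerSeries.min_order_le_order_add _ _)
  | mul_X p i hp =>
    set L : PowerSeries ℂ := ∑ j, MvPolynomial.aeval b (MvPolynomial.pderiv j p) * (a j - b j)
      with hL
    have hs : (∑ j, MvPolynomial.aeval b (MvPolynomial.pderiv j (p * MvPolynomial.X i))
        * (a j - b j)) = L * b i + MvPolynomial.aeval b p * (a i - b i) := by
      have e1 : ∀ j : σ, MvPolynomial.aeval b (MvPolynomial.pderiv j (p * MvPolynomial.X i))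
          * (a j - b j)
          = MvPolynomial.aeval b (MvPolynomial.pderiv j p) * (a j - b j) * b i
            + (MvPolynomial.aeval b p * MvPolynomial.aeval b
                (MvPolynomial.pderiv j (MvPolynomial.X i : MvPolynomial σ ℂ))) * (a j - b j) := by
        intro j
        rw [MvPolynomial.pderiv_mul, map_add, map_mul, map_mul, MvPolynomial.aeval_X]
        ring
      rw [Finset.sum_congr rfl fun j _ => e1 j, Finset.sum_add_distrib, ← Finset.sum_mul, ← hL]
      congr 1
      rw [Finset.sum_eq_single i]
      · rw [MvPolynomial.pderiv_X_self, map_one, mul_one]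
      · intro j _ hj
        rw [MvPolynomial.pderiv_X_of_ne (Ne.symm hj), map_zero, mul_zero, zero_mul]
      · intro habs; exact absurd (Finset.mem_univ i) habs
    have key : MvPolynomial.aeval a (p * MvPolynomial.X i)
        - MvPolynomial.aeval b (p * MvPolynomial.X i)
        - ∑ j, MvPolynomial.aeval b (MvPolynomial.pderiv j (p * MvPolynomial.X i)) * (a j - b j)
        = L * (a i - b i)
          + (MvPolynomial.aeval a p - MvPolynomial.aeval b p - L) * a i := by
      rw [map_mul, map_mul, MvPolynomial.aeval_X, MvPolynomial.aeval_X, hs]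
      ring
    rw [key]
    have hLord : d ≤ L.order := by
      refine aux_le_order_sum _ _ _ fun j _ => ?_
      rw [PowerSeries.order_mul]
      exact le_trans (hd j) le_add_self
    have h1 : d + d ≤ (L * (a i - b i)).order := by
      rw [PowerSeries.order_mul]
      exact add_le_add hLord (hd i)
    have h2 : d + d ≤ ((MvPolynomial.aeval a p - MvPolynomial.aeval b p - L) * a i).order := by
      rw [PowerSeries.order_mul]
      exact le_trans hp le_self_add
    exact le_trans (le_min h1 h2) (PowerSeries.min_order_le_order_add _ _)

end Aux


/-- Truncated Newton iteration on power series: if `H(x(t),t) = 0`, each Jacobian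
`J_H(x^{(k)}(t),t)` is a unit in `ℂ[[t]]^{n×n}`, and `x^{(k+1)}` is the truncation to
degree `< w_k` of `x^{(k)} − J_H(x^{(k)},t)⁻¹ H(x^{(k)},t)`, then
`ord(x^{(k+1)} − x) ≥ min(2·ord(x^{(k)} − x), w_k)` for all `k ≥ 0`. -/
theorem stmt6 {n : ℕ} (H : Fin n → MvPolynomial (Fin n ⊕ Unit) ℂ)
    (x : Fin n → PowerSeries ℂ) (hx : ∀ i, evalH H x i = 0)
    (X : ℕ → Fin n → PowerSeries ℂ) (w : ℕ → ℕ) (hw : ∀ k, 0 < w k)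
    (hstep : ∀ k, ∃ Jinv : Matrix (Fin n) (Fin n) (PowerSeries ℂ),
      jacH H (X k) * Jinv = 1 ∧ Jinv * jacH H (X k) = 1 ∧
      X (k + 1) = fun i =>
        ((PowerSeries.trunc (w k)
          ((X k - Jinv.mulVec (evalH H (X k))) i) : Polynomial ℂ) : PowerSeries ℂ)) :
    ∀ k, min (vecOrd (X k - x) + vecOrd (X k - x)) (w k : ℕ∞) ≤
      vecOrd (X (k + 1) - x) := by
  classical
  intro k
  obtain ⟨Jinv, hJ1, hJ2, hX1⟩ := hstep k
  set a : (Fin n ⊕ Unit) → PowerSeries ℂ := Sum.elim x fun _ => PowerSeries.X with ha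
  set b : (Fin n ⊕ Unit) → PowerSeries ℂ := Sum.elim (X k) fun _ => PowerSeries.X with hb
  set D : ℕ∞ := Finset.univ.inf fun i => ((X k - x) i).order with hD
  have hd : ∀ v, D ≤ (a v - b v).order := by
    rintro (j | u)
    · have e : a (Sum.inl j) - b (Sum.inl j) = -((X k - x) j) := by
        simp [ha, hb, Pi.sub_apply, neg_sub]
      rw [e, aux_order_neg]
      exact Finset.inf_le (Finset.mem_univ j)
    · have e : a (Sum.inr u) - b (Sum.inr u) = 0 := by simp [ha, hb]
      rw [e, PowerSeries.order_zero]
      exact le_top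
  set E : Fin n → PowerSeries ℂ := fun i =>
    MvPolynomial.aeval a (H i) - MvPolynomial.aeval b (H i) -
      ∑ v, MvPolynomial.aeval b (MvPolynomial.pderiv v (H i)) * (a v - b v) with hE
  have hEord : ∀ i, D + D ≤ (E i).order := fun i => aux_taylor a b D hd (H i)
  have heval : evalH H (X k) = (jacH H (X k)).mulVec (X k - x) - E := by
    funext i
    have h0 : MvPolynomial.aeval a (H i) = 0 := hx i
    have hsum : (∑ v, MvPolynomial.aeval b (MvPolynomial.pderiv v (H i)) * (a v - b v))
        = -((jacH H (X k)).mulVec (X k - x) i) := by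
      rw [Fintype.sum_sum_type]
      have h2 : (∑ u : Unit, MvPolynomial.aeval b (MvPolynomial.pderiv (Sum.inr u) (H i))
          * (a (Sum.inr u) - b (Sum.inr u))) = 0 := by
        simp [ha, hb]
      rw [h2, add_zero]
      have h1 : ∀ j : Fin n, MvPolynomial.aeval b (MvPolynomial.pderiv (Sum.inl j) (H i))
          * (a (Sum.inl j) - b (Sum.inl j)) = -(jacH H (X k) i j * (X k - x) j) := by
        intro j
        simp only [ha, hb, Sum.elim_inl, jacH, Pi.sub_apply]
        ring
      rw [Finset.sum_congr rfl fun j _ => h1 j]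
      simp [Matrix.mulVec, dotProduct]
    have hbi : evalH H (X k) i = MvPolynomial.aeval b (H i) := rfl
    have hEi : E i = MvPolynomial.aeval a (H i) - MvPolynomial.aeval b (H i) -
        ∑ v, MvPolynomial.aeval b (MvPolynomial.pderiv v (H i)) * (a v - b v) := rfl
    rw [Pi.sub_apply, hbi, hEi, hsum, h0]
    ring
  have hyx : (X k - Jinv.mulVec (evalH H (X k))) - x = Jinv.mulVec E := by
    rw [heval, Matrix.mulVec_sub, Matrix.mulVec_mulVec, hJ2, Matrix.one_mulVec]
    abel
  have hyord : ∀ i, D + D ≤ ((Jinv.mulVec E) i).order := by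
    intro i
    have e : (Jinv.mulVec E) i = ∑ j, Jinv i j * E j := rfl
    rw [e]
    refine aux_le_order_sum _ _ _ fun j _ => ?_
    rw [PowerSeries.order_mul]
    exact le_trans (hEord j) le_add_self
  have gv : ∀ v : Fin n → PowerSeries ℂ,
      vecOrd v = (Finset.univ.inf fun i => (v i).order) :=
    fun v => rfl
  rw [gv, gv, ← hD]
  refine Finset.le_inf fun i _ => ?_
  set y : Fin n → PowerSeries ℂ := X k - Jinv.mulVec (evalH H (X k)) with hy
  have hXk1 : (X (k + 1) - x) i =
      (((PowerSeries.trunc (w k) (y i) : Polynomial ℂ) : PowerSeries ℂ) - y i)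
        + (y i - x i) := by
    rw [Pi.sub_apply, hX1]
    ring
  rw [hXk1]
  have ht : ((w k : ℕ) : ℕ∞) ≤
      (((PowerSeries.trunc (w k) (y i) : Polynomial ℂ) : PowerSeries ℂ) - y i).order := by
    refine PowerSeries.nat_le_order _ _ fun m hm => ?_
    rw [map_sub, Polynomial.coeff_coe, PowerSeries.coeff_trunc, if_pos hm, sub_self]
  have hyi : D + D ≤ (y i - x i).order := by
    have e : y i - x i = (Jinv.mulVec E) i := by
      rw [← Pi.sub_apply y x, hy, hyx]
    rw [e]
    exact hyord i
  exact le_trans (le_min (le_trans (min_le_right _ _) ht)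
    (le_trans (min_le_left _ _) hyi)) (PowerSeries.min_order_le_order_add _ _)
end
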